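/- arXiv:1302.0954 — 6 statements merged into one kernel-verified Lean document; each statement's English description precedes it below -/
import Mathlib

section
/- Let (μ_n) be finite Borel measures on [0,1] converging weakly to a finite Borel measure μ, and let s > 0 be such that the energies ∬ |x − y|^{−s} dμ_n(x) dμ_n(y) are uniformly bounded in n. Then for every t with 0 < t < s, ∬ |x − y|^{−t} dμ_n(x) dμ_n(y) → ∬ |x − y|^{−t} dμ(x) dμ(y) as n → ∞. -/
/-!
Split the kernel at scale `ε`: the truncation `(max |x - y| ε) ^ (-t)` is bounded and continuous
on `ℝ²`, so its energy converges because `μn ⊗ μn → μ ⊗ μ` weakly, while the part cut off is at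
most `ε ^ (s - t) * |x - y| ^ (-s)`, whose energy is at most `ε ^ (s - t) * B` uniformly in `n`.
On the side of `μ`, monotone convergence recovers the `t`-energy from its truncations as `ε → 0`.
-/

open MeasureTheory Filter Topology
open scoped ENNReal BoundedContinuousFunction

theorem ENNReal.tendsto_of_uniform_approx {ι κ : Type*} {l : Filter ι} {l' : Filter κ}
    [l.NeBot] [l'.NeBot] {a : ι → ℝ≥0∞} {A : ℝ≥0∞} {b : κ → ι → ℝ≥0∞}
    {β c : κ → ℝ≥0∞} (hb : ∀ k, Tendsto (b k) l (𝓝 (β k))) (hβ : Tendsto β l' (𝓝 A))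
    (hc : Tendsto c l' (𝓝 0)) (hba : ∀ k i, b k i ≤ a i)
    (hab : ∀ k i, a i ≤ b k i + c k) :
    Tendsto a l (𝓝 A) := by
  refine tendsto_of_le_liminf_of_limsup_le (le_of_tendsto' hβ fun k => ?_)
    (ge_of_tendsto' (by simpa using hβ.add hc) fun k => ?_)
  · rw [← (hb k).liminf_eq]
    exact liminf_le_liminf (.of_forall (hba k))
  · rw [← ((hb k).add_const (c k)).limsup_eq]
    exact limsup_le_limsup (.of_forall (hab k))

namespace MeasureTheory.FiniteMeasure

variable {α β : Type*} [MeasurableSpace α] [MeasurableSpace β]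

lemma prod_ne_zero {μ : FiniteMeasure α} {ν : FiniteMeasure β} (hμ : μ ≠ 0) (hν : ν ≠ 0) :
    μ.prod ν ≠ 0 := by
  rw [← mass_nonzero_iff, mass_prod]
  exact mul_ne_zero ((mass_nonzero_iff _).2 hμ) ((mass_nonzero_iff _).2 hν)

variable [Nonempty α] [Nonempty β]

lemma normalize_prod {μ : FiniteMeasure α} {ν : FiniteMeasure β} (hμ : μ ≠ 0) (hν : ν ≠ 0) :
    (μ.prod ν).normalize = μ.normalize.prod ν.normalize := by
  apply ProbabilityMeasure.toMeasure_injective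
  rw [ProbabilityMeasure.toMeasure_prod, toMeasure_normalize_eq_of_nonzero _ (prod_ne_zero hμ hν),
    toMeasure_normalize_eq_of_nonzero _ hμ, toMeasure_normalize_eq_of_nonzero _ hν,
    Measure.prod_smul_left, Measure.prod_smul_right, smul_smul, mass_prod, mul_inv,
    toMeasure_prod]

variable [TopologicalSpace α] [TopologicalSpace β] [SecondCountableTopology α]
  [SecondCountableTopology β] [TopologicalSpace.PseudoMetrizableSpace α]
  [TopologicalSpace.PseudoMetrizableSpace β] [OpensMeasurableSpace α] [OpensMeasurableSpace β]

theorem tendsto_prod {γ : Type*} {F : Filter γ} {μs : γ → FiniteMeasure α}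
    {νs : γ → FiniteMeasure β} {μ : FiniteMeasure α} {ν : FiniteMeasure β}
    (hμs : Tendsto μs F (𝓝 μ)) (hνs : Tendsto νs F (𝓝 ν)) :
    Tendsto (fun i => (μs i).prod (νs i)) F (𝓝 (μ.prod ν)) := by
  have hmass : Tendsto (fun i => ((μs i).prod (νs i)).mass) F (𝓝 (μ.prod ν).mass) := by
    simpa only [mass_prod] using hμs.mass.mul hνs.mass
  rcases eq_or_ne μ 0 with rfl | hμ
  · rw [zero_prod] at hmass ⊢
    exact tendsto_zero_of_tendsto_zero_mass (by simpa using hmass)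
  rcases eq_or_ne ν 0 with rfl | hν
  · rw [prod_zero] at hmass ⊢
    exact tendsto_zero_of_tendsto_zero_mass (by simpa using hmass)
  refine (tendsto_normalize_iff_tendsto (prod_ne_zero hμ hν)).1 ⟨?_, hmass⟩
  have hev : ∀ᶠ i in F,
      (μs i).normalize.prod (νs i).normalize = ((μs i).prod (νs i)).normalize := by
    filter_upwards [hμs.mass.eventually_ne ((mass_nonzero_iff _).2 hμ),
      hνs.mass.eventually_ne ((mass_nonzero_iff _).2 hν)] with i hμi hνi
    exact (normalize_prod ((mass_nonzero_iff _).1 hμi) ((mass_nonzero_iff _).1 hνi)).symm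
  rw [normalize_prod hμ hν]
  exact ((ProbabilityMeasure.continuous_prod.tendsto _).comp
    ((tendsto_normalize_of_tendsto hμs hμ).prodMk_nhds
      (tendsto_normalize_of_tendsto hνs hν))).congr' hev

end MeasureTheory.FiniteMeasure

noncomputable def rieszKernel (r u : ℝ) : ℝ≥0∞ := ENNReal.ofReal |u| ^ (-r)

noncomputable def truncRieszKernel (r ε u : ℝ) : ℝ := max |u| ε ^ (-r)

noncomputable def rieszEnergy (r : ℝ) (ν : Measure ℝ) : ℝ≥0∞ :=
  ∫⁻ p : ℝ × ℝ, rieszKernel r (p.1 - p.2) ∂ν.prod ν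

noncomputable def truncRieszEnergy (r ε : ℝ) (ν : Measure ℝ) : ℝ≥0∞ :=
  ∫⁻ p : ℝ × ℝ, ENNReal.ofReal (truncRieszKernel r ε (p.1 - p.2)) ∂ν.prod ν

section Kernel

variable {r s t ε : ℝ}

lemma continuous_truncRieszKernel (r : ℝ) (hε : 0 < ε) : Continuous (truncRieszKernel r ε) :=
  (continuous_abs.max continuous_const).rpow_const fun _ => .inl (by positivity)

lemma measurable_ofReal_truncRieszKernel_sub (r : ℝ) (hε : 0 < ε) :
    Measurable fun p : ℝ × ℝ => ENNReal.ofReal (truncRieszKernel r ε (p.1 - p.2)) :=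
  (ENNReal.continuous_ofReal.comp
    ((continuous_truncRieszKernel r hε).comp (continuous_fst.sub continuous_snd))).measurable

lemma truncRieszKernel_nonneg (hε : 0 < ε) (u : ℝ) : 0 ≤ truncRieszKernel r ε u := by
  unfold truncRieszKernel
  positivity

lemma truncRieszKernel_le (hr : 0 ≤ r) (hε : 0 < ε) (u : ℝ) :
    truncRieszKernel r ε u ≤ ε ^ (-r) :=
  Real.rpow_le_rpow_of_nonpos hε (le_max_right _ _) (neg_nonpos.2 hr)

lemma truncRieszKernel_le_of_le (hr : 0 ≤ r) (hε : 0 < ε) {ε' : ℝ} (hεε' : ε ≤ ε') (u : ℝ) :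
    truncRieszKernel r ε' u ≤ truncRieszKernel r ε u :=
  Real.rpow_le_rpow_of_nonpos (by positivity) (max_le_max le_rfl hεε') (neg_nonpos.2 hr)

lemma ofReal_truncRieszKernel (hε : 0 < ε) (u : ℝ) :
    ENNReal.ofReal (truncRieszKernel r ε u) = ENNReal.ofReal (max |u| ε) ^ (-r) :=
  (ENNReal.ofReal_rpow_of_pos (by positivity)).symm

lemma ofReal_truncRieszKernel_le (hr : 0 ≤ r) (hε : 0 < ε) (u : ℝ) :
    ENNReal.ofReal (truncRieszKernel r ε u) ≤ rieszKernel r u := by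
  rw [ofReal_truncRieszKernel hε, rieszKernel, ENNReal.rpow_neg, ENNReal.rpow_neg]
  gcongr
  exact le_max_left _ _

lemma tendsto_ofReal_truncRieszKernel (u : ℝ) :
    Tendsto (fun ε => ENNReal.ofReal (truncRieszKernel r ε u)) (𝓝[>] 0)
      (𝓝 (rieszKernel r u)) := by
  have hcont : Tendsto (fun ε => ENNReal.ofReal (max |u| ε) ^ (-r)) (𝓝 0)
      (𝓝 (ENNReal.ofReal (max |u| 0) ^ (-r))) :=
    ((ENNReal.continuous_rpow_const.comp ENNReal.continuous_ofReal).comp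
      (continuous_const.max continuous_id)).tendsto 0
  rw [max_eq_left (abs_nonneg u)] at hcont
  exact (hcont.mono_left nhdsWithin_le_nhds).congr'
    (eventually_nhdsWithin_of_forall fun ε hε => (ofReal_truncRieszKernel hε u).symm)

lemma rieszKernel_le_truncRieszKernel_add (hs : 0 < s) (hts : t ≤ s) (hε : 0 < ε) (u : ℝ) :
    rieszKernel t u ≤
      ENNReal.ofReal (truncRieszKernel t ε u) + ENNReal.ofReal ε ^ (s - t) * rieszKernel s u := by
  rcases le_or_gt ε |u| with hεu | huε
  · rw [ofReal_truncRieszKernel hε, max_eq_left hεu]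
    exact le_self_add
  refine le_add_left ?_
  rcases eq_or_ne u 0 with rfl | hu
  · have hK : rieszKernel s 0 = ∞ := by simp [rieszKernel, hs]
    rw [hK, ENNReal.mul_top (ENNReal.rpow_pos (by simpa using hε) ENNReal.ofReal_ne_top).ne']
    exact le_top
  have hu0 : ENNReal.ofReal |u| ≠ 0 := by simpa using hu
  calc rieszKernel t u = ENNReal.ofReal |u| ^ (s - t) * rieszKernel s u := by
        rw [rieszKernel, rieszKernel, ← ENNReal.rpow_add _ _ hu0 ENNReal.ofReal_ne_top]
        ring_nf
    _ ≤ ENNReal.ofReal ε ^ (s - t) * rieszKernel s u := by gcongr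

end Kernel

section Energy

variable {r s t ε : ℝ}

lemma truncRieszEnergy_le_rieszEnergy (hr : 0 ≤ r) (hε : 0 < ε) (ν : Measure ℝ) :
    truncRieszEnergy r ε ν ≤ rieszEnergy r ν :=
  lintegral_mono fun _ => ofReal_truncRieszKernel_le hr hε _

lemma rieszEnergy_le_truncRieszEnergy_add (hs : 0 < s) (hts : t ≤ s) (hε : 0 < ε)
    (ν : Measure ℝ) :
    rieszEnergy t ν ≤
      truncRieszEnergy t ε ν + ENNReal.ofReal ε ^ (s - t) * rieszEnergy s ν := by
  unfold truncRieszEnergy rieszEnergy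
  rw [← lintegral_const_mul' _ _
      (ENNReal.rpow_ne_top_of_nonneg (sub_nonneg.2 hts) ENNReal.ofReal_ne_top),
    ← lintegral_add_left (measurable_ofReal_truncRieszKernel_sub t hε)]
  exact lintegral_mono fun _ => rieszKernel_le_truncRieszKernel_add hs hts hε _

lemma tendsto_truncRieszEnergy_of_antitone (hr : 0 ≤ r) (ν : Measure ℝ) {ε : ℕ → ℝ}
    (hε0 : ∀ k, 0 < ε k) (hε : Antitone ε) (hlim : Tendsto ε atTop (𝓝 0)) :
    Tendsto (fun k => truncRieszEnergy r (ε k) ν) atTop (𝓝 (rieszEnergy r ν)) := by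
  have hlim' : Tendsto ε atTop (𝓝[>] 0) := tendsto_nhdsWithin_iff.2 ⟨hlim, .of_forall hε0⟩
  exact lintegral_tendsto_of_tendsto_of_monotone
    (fun k => (measurable_ofReal_truncRieszKernel_sub r (hε0 k)).aemeasurable)
    (.of_forall fun _ _ _ hkk' =>
      ENNReal.ofReal_le_ofReal (truncRieszKernel_le_of_le hr (hε0 _) (hε hkk') _))
    (.of_forall fun _ => (tendsto_ofReal_truncRieszKernel _).comp hlim')

lemma tendsto_truncRieszEnergy_of_tendsto (hr : 0 ≤ r) (hε : 0 < ε) {γ : Type*}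
    {F : Filter γ} {μs : γ → FiniteMeasure ℝ} {μ : FiniteMeasure ℝ} (hμs : Tendsto μs F (𝓝 μ)) :
    Tendsto (fun i => truncRieszEnergy r ε (μs i)) F (𝓝 (truncRieszEnergy r ε μ)) := by
  let K : ℝ →ᵇ ℝ := .ofNormedAddCommGroup (truncRieszKernel r ε)
    (continuous_truncRieszKernel r hε) (ε ^ (-r)) fun u => by
      rw [Real.norm_of_nonneg (truncRieszKernel_nonneg hε u)]
      exact truncRieszKernel_le hr hε u
  exact FiniteMeasure.tendsto_iff_forall_lintegral_tendsto.1
    (FiniteMeasure.tendsto_prod hμs hμs)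
    (K.nnrealPart.compContinuous ⟨fun p => p.1 - p.2, by fun_prop⟩)

end Energy

theorem stmt4_general (μn : ℕ → Measure ℝ) (μ : Measure ℝ)
    (hfin : ∀ n, IsFiniteMeasure (μn n)) [IsFiniteMeasure μ]
    (hweak : ∀ f : ℝ → ℝ, Continuous f →
      Filter.Tendsto (fun n => ∫ x, f x ∂(μn n)) Filter.atTop (nhds (∫ x, f x ∂μ)))
    (s : ℝ)
    (hbdd : ∃ B : ℝ, ∀ n,
      ∫⁻ p : ℝ × ℝ, (ENNReal.ofReal |p.1 - p.2|) ^ (-s) ∂((μn n).prod (μn n)) ≤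
        ENNReal.ofReal B)
    (t : ℝ) (ht0 : 0 < t) (hts : t < s) :
    Filter.Tendsto
      (fun n => ∫⁻ p : ℝ × ℝ, (ENNReal.ofReal |p.1 - p.2|) ^ (-t) ∂((μn n).prod (μn n)))
      Filter.atTop
      (nhds (∫⁻ p : ℝ × ℝ, (ENNReal.ofReal |p.1 - p.2|) ^ (-t) ∂(μ.prod μ))) := by
  obtain ⟨B, hB⟩ := hbdd
  let ν : ℕ → FiniteMeasure ℝ := fun n => ⟨μn n, hfin n⟩
  have hν : Tendsto ν atTop (𝓝 ⟨μ, ‹_›⟩) :=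
    FiniteMeasure.tendsto_of_forall_integral_tendsto fun f => hweak f f.continuous
  let ε : ℕ → ℝ := fun k => 2⁻¹ ^ k
  have hε0 : ∀ k, 0 < ε k := fun k => by positivity
  have hε : Antitone ε := fun _ _ => pow_le_pow_of_le_one (by norm_num) (by norm_num)
  have hlim : Tendsto ε atTop (𝓝 0) :=
    tendsto_pow_atTop_nhds_zero_of_lt_one (by norm_num) (by norm_num)
  have herr : Tendsto (fun k => ENNReal.ofReal (ε k) ^ (s - t) * ENNReal.ofReal B) atTop
      (𝓝 0) := by
    have h := (((ENNReal.continuous_rpow_const (y := s - t)).comp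
      ENNReal.continuous_ofReal).tendsto 0).comp hlim
    simpa [ENNReal.zero_rpow_of_pos (sub_pos.2 hts)] using
      ENNReal.Tendsto.mul_const h (.inr ENNReal.ofReal_ne_top)
  exact ENNReal.tendsto_of_uniform_approx
    (fun k => tendsto_truncRieszEnergy_of_tendsto ht0.le (hε0 k) hν)
    (tendsto_truncRieszEnergy_of_antitone ht0.le μ hε0 hε hlim) herr
    (fun k n => truncRieszEnergy_le_rieszEnergy ht0.le (hε0 k) (μn n))
    (fun k n => (rieszEnergy_le_truncRieszEnergy_add (ht0.trans hts) hts.le (hε0 k) (μn n)).trans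
      (add_le_add_right (mul_le_mul_right (hB n) _) _))

theorem stmt4 (μn : ℕ → Measure ℝ) (μ : Measure ℝ)
    (hfin : ∀ n, IsFiniteMeasure (μn n)) [IsFiniteMeasure μ]
    (hsupp : ∀ n, μn n (Set.Icc (0 : ℝ) 1)ᶜ = 0)
    (hsupp' : μ (Set.Icc (0 : ℝ) 1)ᶜ = 0)
    (hweak : ∀ f : ℝ → ℝ, Continuous f →
      Filter.Tendsto (fun n => ∫ x, f x ∂(μn n)) Filter.atTop (nhds (∫ x, f x ∂μ)))
    (s : ℝ) (hs : 0 < s)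
    (hbdd : ∃ B : ℝ, ∀ n,
      ∫⁻ p : ℝ × ℝ, (ENNReal.ofReal |p.1 - p.2|) ^ (-s) ∂((μn n).prod (μn n)) ≤
        ENNReal.ofReal B)
    (t : ℝ) (ht0 : 0 < t) (hts : t < s) :
    Filter.Tendsto
      (fun n => ∫⁻ p : ℝ × ℝ, (ENNReal.ofReal |p.1 - p.2|) ^ (-t) ∂((μn n).prod (μn n)))
      Filter.atTop
      (nhds (∫⁻ p : ℝ × ℝ, (ENNReal.ofReal |p.1 - p.2|) ^ (-t) ∂(μ.prod μ))) :=
  stmt4_general μn μ hfin hweak s hbdd t ht0 hts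
end

section
/- Let 0 < s < 1 and let h : [0,1] → ℝ be a non-negative measurable function such that the function R_s h(x) = ∫_0^1 |x − y|^{−s} h(y) dy is bounded. Let U ⊆ I ⊆ [0,1] be intervals with U non-degenerate, and assume that h does not vanish Lebesgue-almost everywhere on I. Then (1/|U|^s) ∫_U h(x) / R_s(h·χ_I)(x) dx ≤ 1, where R_s(h·χ_I)(x) = ∫_I |x − y|^{−s} h(y) dy. -/
/-! For `x, y ∈ U` one has `|x - y| ≤ |U|`, so `R_s(h χ_I)(x) ≥ |U|^{-s} ∫_U h` on `U`;
integrating `h / R_s(h χ_I) ≤ |U|^s h / ∫_U h` over `U` gives the bound. An infinite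
`R_s(h χ_I)(x)` is harmless: `toReal` sends it to `0`, and `h x / 0 = 0`. -/

open MeasureTheory Filter Set
open scoped ENNReal

/-- `R_s(f·χ_I)(x) = ∫_I |x − y|^{−s} f(y) dy` for a non-negative `f`. -/
noncomputable def Rs (s : ℝ) (f : ℝ → ℝ) (I : Set ℝ) (x : ℝ) : ℝ :=
  (∫⁻ y in I, ENNReal.ofReal (|x - y| ^ (-s) * f y)).toReal

theorem Rs_nonneg {s : ℝ} {f : ℝ → ℝ} {I : Set ℝ} {x : ℝ} : 0 ≤ Rs s f I x :=
  ENNReal.toReal_nonneg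

theorem ENNReal.ofReal_div_toReal_le (a : ℝ) (b : ℝ≥0∞) :
    ENNReal.ofReal (a / b.toReal) ≤ ENNReal.ofReal a / b := by
  rcases eq_or_ne b ∞ with rfl | hb
  · simp
  · simpa [ENNReal.ofReal_toReal hb] using ENNReal.ofReal_div_le (x := a) (b.toReal_nonneg)

theorem rpow_neg_length_le_rpow_neg_abs_sub {s u₁ u₂ x y : ℝ} (hs : 0 ≤ s)
    (hx : x ∈ Icc u₁ u₂) (hy : y ∈ Icc u₁ u₂) (hxy : x ≠ y) :
    (u₂ - u₁) ^ (-s) ≤ |x - y| ^ (-s) := by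
  have hdist : |x - y| ≤ u₂ - u₁ :=
    abs_sub_le_iff.mpr ⟨by linarith [hx.2, hy.1], by linarith [hx.1, hy.2]⟩
  exact Real.rpow_le_rpow_of_nonpos (abs_pos.mpr (sub_ne_zero.mpr hxy)) hdist (neg_nonpos.mpr hs)

theorem ofReal_rpow_neg_mul_lintegral_le {s u₁ u₂ x : ℝ} (hs : 0 ≤ s) (f : ℝ → ℝ)
    {I : Set ℝ} (hUI : Icc u₁ u₂ ⊆ I) (hx : x ∈ Icc u₁ u₂) :
    ENNReal.ofReal ((u₂ - u₁) ^ (-s)) * ∫⁻ y in Icc u₁ u₂, ENNReal.ofReal (f y) ≤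
      ∫⁻ y in I, ENNReal.ofReal (|x - y| ^ (-s) * f y) := by
  rw [← lintegral_const_mul' _ _ ENNReal.ofReal_ne_top]
  refine le_trans (lintegral_mono_ae ?_) (lintegral_mono_set hUI)
  have hne : ∀ᵐ y ∂volume.restrict (Icc u₁ u₂), y ≠ x :=
    ae_restrict_of_ae (by simp [ae_iff])
  filter_upwards [hne, ae_restrict_mem measurableSet_Icc] with y hyx hy
  rw [ENNReal.ofReal_mul (by positivity)]
  gcongr ?_ * _
  exact ENNReal.ofReal_le_ofReal <| rpow_neg_length_le_rpow_neg_abs_sub hs hx hy hyx.symm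

theorem lintegral_div_Rs_le {s u₁ u₂ : ℝ} (hs : 0 ≤ s) (hU : u₁ < u₂) {h : ℝ → ℝ}
    (hmeas : Measurable h) {I : Set ℝ} (hUI : Icc u₁ u₂ ⊆ I) :
    ∫⁻ x in Icc u₁ u₂, ENNReal.ofReal (h x / Rs s h I x) ≤
      ENNReal.ofReal ((u₂ - u₁) ^ s) := by
  have hlen : 0 < u₂ - u₁ := sub_pos.mpr hU
  have hc_inv :
      (ENNReal.ofReal ((u₂ - u₁) ^ (-s)))⁻¹ = ENNReal.ofReal ((u₂ - u₁) ^ s) := by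
    rw [Real.rpow_neg hlen.le, ENNReal.ofReal_inv_of_pos (Real.rpow_pos_of_pos hlen _), inv_inv]
  set c := ENNReal.ofReal ((u₂ - u₁) ^ (-s))
  set A := ∫⁻ y in Icc u₁ u₂, ENNReal.ofReal (h y)
  have hc₀ : c ≠ 0 := (ENNReal.ofReal_pos.mpr (Real.rpow_pos_of_pos hlen _)).ne'
  calc ∫⁻ x in Icc u₁ u₂, ENNReal.ofReal (h x / Rs s h I x)
      ≤ ∫⁻ x in Icc u₁ u₂, ENNReal.ofReal (h x) * (c * A)⁻¹ := by
        refine setLIntegral_mono' measurableSet_Icc fun x hx => ?_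
        refine (ENNReal.ofReal_div_toReal_le _ _).trans ?_
        exact ENNReal.div_le_div_left (ofReal_rpow_neg_mul_lintegral_le hs h hUI hx) _
    _ = A / (c * A) := lintegral_mul_const _ hmeas.ennreal_ofReal
    _ ≤ c⁻¹ := ENNReal.div_le_of_le_mul
        (ENNReal.inv_mul_cancel_left hc₀ ENNReal.ofReal_ne_top).ge
    _ = ENNReal.ofReal ((u₂ - u₁) ^ s) := hc_inv

theorem stmt5_general (s : ℝ) (hs0 : 0 < s)
    (h : ℝ → ℝ) (hmeas : Measurable h) (hnn : ∀ x, 0 ≤ h x)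
    (u₁ u₂ i₁ i₂ : ℝ) (hU : u₁ < u₂)
    (hUI : Set.Icc u₁ u₂ ⊆ Set.Icc i₁ i₂) :
    (1 / (u₂ - u₁) ^ s) *
        ∫ x in Set.Icc u₁ u₂, h x / Rs s h (Set.Icc i₁ i₂) x ≤ 1 := by
  have hp : 0 < (u₂ - u₁) ^ s := Real.rpow_pos_of_pos (sub_pos.mpr hU) _
  have hint : ∫ x in Icc u₁ u₂, h x / Rs s h (Icc i₁ i₂) x ≤ (u₂ - u₁) ^ s := by
    refine (Real.le_norm_self _).trans ((norm_integral_le_lintegral_norm _).trans ?_)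
    refine ENNReal.toReal_le_of_le_ofReal hp.le
      (le_of_eq_of_le ?_ (lintegral_div_Rs_le hs0.le hU hmeas hUI))
    exact lintegral_congr fun x => by rw [Real.norm_of_nonneg (div_nonneg (hnn x) Rs_nonneg)]
  rw [one_div, inv_mul_le_iff₀ hp, mul_one]
  exact hint

theorem stmt5 (s : ℝ) (hs0 : 0 < s) (hs1 : s < 1)
    (h : ℝ → ℝ) (hmeas : Measurable h) (hnn : ∀ x, 0 ≤ h x)
    (hbdd : ∃ B : ℝ, ∀ x ∈ Set.Icc (0 : ℝ) 1,
      ∫⁻ y in Set.Icc (0 : ℝ) 1, ENNReal.ofReal (|x - y| ^ (-s) * h y) ≤ ENNReal.ofReal B)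
    (u₁ u₂ i₁ i₂ : ℝ) (hU : u₁ < u₂)
    (hUI : Set.Icc u₁ u₂ ⊆ Set.Icc i₁ i₂)
    (hI : Set.Icc i₁ i₂ ⊆ Set.Icc (0 : ℝ) 1)
    (hnv : ¬ (∀ᵐ x ∂(volume.restrict (Set.Icc i₁ i₂)), h x = 0)) :
    (1 / (u₂ - u₁) ^ s) *
        ∫ x in Set.Icc u₁ u₂, h x / Rs s h (Set.Icc i₁ i₂) x ≤ 1 :=
  stmt5_general s hs0 h hmeas hnn u₁ u₂ i₁ i₂ hU hUI
end

section
/- Let λ ∈ (1/2, 1) and suppose that the Bernoulli convolution measure μ_λ is absolutely continuous with density h_λ ∈ L²([0,1]). Then for every ε > 0 there exists a constant C_ε such that |I|^{1+ε} ‖h_λ·χ_I‖_{L²}² ≤ C_ε ‖h_λ·χ_I‖_{L¹}² holds for every interval I ⊆ [0,1]. -/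
open MeasureTheory Filter Set
open scoped ENNReal

/-- `μ` is the Bernoulli convolution measure `μ_λ`: the unique Borel probability
measure on `[0,1]` with `μ = (1/2)·(S₁)_*μ + (1/2)·(S₂)_*μ` where `S₁ x = λx`
and `S₂ x = λx + 1 − λ`. -/
def IsBernoulliConvolution (lam : ℝ) (μ : Measure ℝ) : Prop :=
  IsProbabilityMeasure μ ∧ μ (Set.Icc (0 : ℝ) 1) = 1 ∧
    μ = (1 / 2 : ℝ≥0∞) • Measure.map (fun x => lam * x) μ +
      (1 / 2 : ℝ≥0∞) • Measure.map (fun x => lam * x + 1 - lam) μ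

/-!
Write `m(I) = μ(I)` and `y(I) = ∫_I h²`, and `I₁ = S₁⁻¹I`, `I₂ = S₂⁻¹I` for the two preimages of
an interval `I`, of length `|I|/λ`. Self-similarity gives `m(I) = (m(I₁) + m(I₂))/2` and, for the
density, `h = (h ∘ S₁⁻¹ + h ∘ S₂⁻¹)/(2λ)`, so Minkowski's inequality and a change of variables give
`√y(I) ≤ (√y(I₁) + √y(I₂))/(2√λ)`.

Fix `θ > 1/λ` and put `σ = λθ > 1`. By induction on `n` we show `y(I) ≤ C θⁿ m(I)²` for all
`I ⊆ [0,1]` with `|I| > λⁿ`. Each preimage `Iᵢ`, cut down to `[0,1]`, is either long enough for the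
induction hypothesis, or a short interval `[0,v]` or `[1-v,1]` with `v ≤ λⁿ`. On those, `y` decays
like `(4λ)⁻ⁿ`, because near an endpoint only one branch contributes to the recursion; on the other
hand `m(I) ≳ 2⁻ⁿ`. For large `C` the boundary pieces therefore cost at most a factor `√σ` in
`√y(I₁) + √y(I₂) ≤ 2√σ √(Cθⁿ) m(I)`, and the recursion turns this into `y(I) ≤ C θⁿ⁺¹ m(I)²`.
Taking `θ = λ^-(1+ε)` and `λⁿ⁺¹ < |I| ≤ λⁿ` gives the theorem.
-/

lemma setLIntegral_comp_div_sub {c : ℝ} (hc : 0 < c) (t : ℝ) {A : Set ℝ} (hA : MeasurableSet A)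
    (F : ℝ → ℝ≥0∞) :
    ∫⁻ x in A, F ((x - t) / c) = ENNReal.ofReal c * ∫⁻ y in (fun y => c * y + t) ⁻¹' A, F y := by
  have hsurj : Function.Surjective fun y : ℝ => c * y + t := fun x =>
    ⟨(x - t) / c, by field_simp; ring⟩
  rw [← lintegral_const_mul' _ _ ENNReal.ofReal_ne_top]
  conv_lhs => rw [← image_preimage_eq A hsurj]
  rw [lintegral_image_eq_lintegral_abs_deriv_mul (f := fun y => c * y + t)
    (hA.preimage (by fun_prop))
    (fun y _ => ((hasDerivAt_id y).const_mul c |>.add_const t).hasDerivWithinAt)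
    (fun y _ z _ h => by simpa [hc.ne'] using h)]
  refine setLIntegral_congr_fun (hA.preimage (by fun_prop)) fun y _ => ?_
  rw [mul_one, abs_of_pos hc, add_sub_cancel_right, mul_div_cancel_left₀ _ hc.ne']

lemma preimage_affine_Icc {c : ℝ} (hc : 0 < c) (t a b : ℝ) :
    (fun y => c * y + t) ⁻¹' Icc a b = Icc ((a - t) / c) ((b - t) / c) := by
  ext y
  simp only [mem_preimage, mem_Icc, div_le_iff₀ hc, le_div_iff₀ hc]
  constructor <;> rintro ⟨h₁, h₂⟩ <;> constructor <;> linarith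

lemma lintegral_add_sq_le {α : Type*} [MeasurableSpace α] {μ : Measure α} {f g : α → ℝ≥0∞}
    (hf : AEMeasurable f μ) (hg : AEMeasurable g μ) :
    ∫⁻ a, (f a + g a) ^ 2 ∂μ ≤
      ((∫⁻ a, f a ^ 2 ∂μ) ^ (1 / 2 : ℝ) + (∫⁻ a, g a ^ 2 ∂μ) ^ (1 / 2 : ℝ)) ^ 2 := by
  have hmink := ENNReal.lintegral_Lp_add_le hf hg one_le_two
  simp only [ENNReal.rpow_two, Pi.add_apply] at hmink
  calc ∫⁻ a, (f a + g a) ^ 2 ∂μ = ((∫⁻ a, (f a + g a) ^ 2 ∂μ) ^ (1 / 2 : ℝ)) ^ 2 := by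
        rw [← ENNReal.rpow_natCast, ← ENNReal.rpow_mul]; norm_num
    _ ≤ _ := by gcongr

lemma lintegral_sq_le_of_ae_eq {L : ℝ} (hL : 0 < L) {H : ℝ → ℝ≥0∞} (hH : Measurable H)
    (heq : H =ᵐ[volume] fun x => (2 * ENNReal.ofReal L)⁻¹ * (H (x / L) + H ((x - (1 - L)) / L)))
    {A : Set ℝ} (hA : MeasurableSet A) :
    ∫⁻ x in A, H x ^ 2 ≤ (4 * ENNReal.ofReal L)⁻¹ *
      ((∫⁻ y in (L * ·) ⁻¹' A, H y ^ 2) ^ (1 / 2 : ℝ) +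
        (∫⁻ y in (fun y => L * y + (1 - L)) ⁻¹' A, H y ^ 2) ^ (1 / 2 : ℝ)) ^ 2 := by
  have h₁ := setLIntegral_comp_div_sub hL 0 hA (H · ^ 2)
  simp only [sub_zero, add_zero] at h₁
  have h₂ := setLIntegral_comp_div_sub hL (1 - L) hA (H · ^ 2)
  have hL' : ENNReal.ofReal L ≠ 0 := by simpa using hL
  have hconst : (2 * ENNReal.ofReal L)⁻¹ ^ 2 * ENNReal.ofReal L = (4 * ENNReal.ofReal L)⁻¹ := by
    rw [show (2 : ℝ≥0∞) = ENNReal.ofReal 2 by simp, show (4 : ℝ≥0∞) = ENNReal.ofReal 4 by simp,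
      ← ENNReal.ofReal_mul zero_le_two, ← ENNReal.ofReal_mul zero_le_four,
      ← ENNReal.ofReal_inv_of_pos (by positivity), ← ENNReal.ofReal_inv_of_pos (by positivity),
      ← ENNReal.ofReal_pow (by positivity), ← ENNReal.ofReal_mul (by positivity)]
    congr 1
    field_simp
    ring
  calc ∫⁻ x in A, H x ^ 2
      = ∫⁻ x in A, ((2 * ENNReal.ofReal L)⁻¹ * (H (x / L) + H ((x - (1 - L)) / L))) ^ 2 :=
        lintegral_congr_ae (ae_restrict_of_ae (heq.mono fun x hx => by dsimp only at hx ⊢; rw [hx]))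
    _ = (2 * ENNReal.ofReal L)⁻¹ ^ 2 * ∫⁻ x in A, (H (x / L) + H ((x - (1 - L)) / L)) ^ 2 := by
        simp_rw [mul_pow]
        exact lintegral_const_mul' _ _ (by simp [hL'])
    _ ≤ (2 * ENNReal.ofReal L)⁻¹ ^ 2 * ((∫⁻ x in A, H (x / L) ^ 2) ^ (1 / 2 : ℝ) +
          (∫⁻ x in A, H ((x - (1 - L)) / L) ^ 2) ^ (1 / 2 : ℝ)) ^ 2 := by
        gcongr
        exact lintegral_add_sq_le (by fun_prop) (by fun_prop)
    _ = _ := by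
        rw [h₁, h₂, ENNReal.mul_rpow_of_nonneg _ _ (by norm_num),
          ENNReal.mul_rpow_of_nonneg _ _ (by norm_num), ← mul_add, mul_pow, ← mul_assoc,
          ← ENNReal.rpow_two (_ ^ _), ← ENNReal.rpow_mul]
        norm_num [hconst]

lemma setIntegral_eq_measureReal_withDensity {α : Type*} [MeasurableSpace α] {μ : Measure α}
    {f : α → ℝ} (hf : Measurable f) (hnn : ∀ x, 0 ≤ f x) {s : Set α} (hs : MeasurableSet s) :
    ∫ x in s, f x ∂μ = (μ.withDensity fun x => ENNReal.ofReal (f x)).real s := by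
  rw [integral_eq_lintegral_of_nonneg_ae (.of_forall hnn) hf.aestronglyMeasurable,
    measureReal_def, withDensity_apply _ hs]

lemma withDensity_ofReal_sq_absolutelyContinuous {α : Type*} [MeasurableSpace α] {μ : Measure α}
    {f : α → ℝ} (hf : Measurable f) (hnn : ∀ x, 0 ≤ f x) :
    (μ.withDensity fun x => ENNReal.ofReal (f x ^ 2)) ≪
      μ.withDensity fun x => ENNReal.ofReal (f x) := by
  have : (μ.withDensity fun x => ENNReal.ofReal (f x ^ 2)) =
      (μ.withDensity fun x => ENNReal.ofReal (f x)).withDensity fun x => ENNReal.ofReal (f x) := by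
    rw [← withDensity_mul _ hf.ennreal_ofReal hf.ennreal_ofReal]
    congr with x
    rw [Pi.mul_apply, ← ENNReal.ofReal_mul (hnn x), sq]
  exact this ▸ withDensity_absolutelyContinuous _ _

lemma measureReal_Icc_eq_max_min {ν : Measure ℝ} (hν : ν (Icc 0 1)ᶜ = 0) (a b : ℝ) :
    ν.real (Icc a b) = ν.real (Icc (max a 0) (min b 1)) := by
  rw [← Icc_inter_Icc, measureReal_def, measureReal_def, measure_inter_conull hν]

lemma measureReal_Icc_of_le {ν : Measure ℝ} [NullSingletonClass ν] {a b : ℝ} (hab : b ≤ a) :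
    ν.real (Icc a b) = 0 := by
  rw [measureReal_def, (subsingleton_Icc_of_ge hab).measure_zero ν, ENNReal.toReal_zero]

lemma exists_le_mul_pow_of_le_mul_comp_div {f : ℝ → ℝ} {L q δ Y : ℝ} (hL0 : 0 < L) (hL1 : L < 1)
    (hq0 : 0 < q) (hq1 : q ≤ 1) (hδ : 0 < δ) (hY : ∀ v, f v ≤ Y)
    (hf : ∀ v ≤ δ, f v ≤ q * f (v / L)) :
    ∃ K, 0 ≤ K ∧ ∀ (n : ℕ) (v : ℝ), v ≤ L ^ n → f v ≤ K * q ^ n := by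
  obtain ⟨M, hM⟩ := exists_pow_lt_of_lt_one hδ hL1
  refine ⟨max Y 0 / q ^ M, by positivity, fun n => ?_⟩
  induction n with
  | zero =>
    intro v _
    calc f v ≤ max Y 0 := (hY v).trans (le_max_left _ _)
      _ ≤ max Y 0 / q ^ M * q ^ 0 := by
        rw [pow_zero, mul_one]
        exact le_div_self (le_max_right _ _) (by positivity) (pow_le_one₀ hq0.le hq1)
  | succ n ih =>
    intro v hv
    by_cases hnM : n + 1 ≤ M
    · calc f v ≤ max Y 0 := (hY v).trans (le_max_left _ _)
        _ = max Y 0 / q ^ M * q ^ M := by field_simp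
        _ ≤ max Y 0 / q ^ M * q ^ (n + 1) :=
          mul_le_mul_of_nonneg_left (pow_le_pow_of_le_one hq0.le hq1 hnM) (by positivity)
    · have hvδ : v ≤ δ :=
        hv.trans ((pow_le_pow_of_le_one hL0.le hL1.le (by omega)).trans hM.le)
      calc f v ≤ q * f (v / L) := hf v hvδ
        _ ≤ q * (max Y 0 / q ^ M * q ^ n) := by
          gcongr
          exact ih _ (by rwa [div_le_iff₀ hL0, ← pow_succ])
        _ = max Y 0 / q ^ M * q ^ (n + 1) := by ring

lemma rpow_mul_inv_rpow_pow_le {L x s : ℝ} (hL : 0 < L) (hx : 0 ≤ x) (hs : 0 ≤ s) {n : ℕ}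
    (hxn : x ≤ L ^ n) : x ^ s * (L ^ s)⁻¹ ^ (n + 1) ≤ (L ^ s)⁻¹ := by
  have hLs : 0 < L ^ s := Real.rpow_pos_of_pos hL s
  calc x ^ s * (L ^ s)⁻¹ ^ (n + 1) ≤ (L ^ s) ^ n * (L ^ s)⁻¹ ^ (n + 1) := by
        rw [Real.rpow_pow_comm hL.le]
        gcongr
    _ = (L ^ s)⁻¹ := by
        rw [pow_succ, ← mul_assoc, ← mul_pow, mul_inv_cancel₀ hLs.ne', one_pow, one_mul]

lemma sqrt_mul_inv_four_mul_pow_le {L θ c K s M : ℝ} (hL : 0 < L) (hθ : L⁻¹ ≤ θ) (hc : 0 < c)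
    (hK : 0 ≤ K) (hs : 1 < s) (n : ℕ) (hM : c / 2 ^ (n + 1) ≤ M) :
    √(K * (4 * L)⁻¹ ^ n) ≤ (s - 1) * √(4 * K / ((s - 1) ^ 2 * c ^ 2) * θ ^ n) * M := by
  have hθ0 : 0 < θ := (inv_pos.2 hL).trans_le hθ
  have hM0 : 0 ≤ M := hM.trans' (by positivity)
  rw [Real.sqrt_le_left (mul_nonneg (mul_nonneg (by linarith) (Real.sqrt_nonneg _)) hM0),
    mul_pow, mul_pow, Real.sq_sqrt (by positivity)]
  calc K * (4 * L)⁻¹ ^ n ≤ K * (θ / 4) ^ n := by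
        gcongr
        rw [mul_inv, mul_comm]; exact mul_le_mul_of_nonneg_right hθ (by norm_num)
    _ = (s - 1) ^ 2 * (4 * K / ((s - 1) ^ 2 * c ^ 2) * θ ^ n) * (c / 2 ^ (n + 1)) ^ 2 := by
        have h4 : ((2 : ℝ) ^ (n + 1)) ^ 2 = 4 * 4 ^ n := by
          rw [← pow_mul, mul_comm, pow_mul]; norm_num [pow_succ, mul_comm]
        have : s - 1 ≠ 0 := by linarith
        rw [div_pow c, div_pow θ, h4]
        field_simp
    _ ≤ _ := by gcongr

/-- `√ν(I) ≤ (√ν(S₁⁻¹I) + √ν(S₂⁻¹I)) / (2√L)` for every interval `I`. -/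
def L2SelfSimilarBound (L : ℝ) (ν : Measure ℝ) : Prop :=
  ∀ a b : ℝ, ν.real (Icc a b) ≤ (4 * L)⁻¹ * (√(ν.real (Icc (a / L) (b / L))) +
    √(ν.real (Icc ((a - (1 - L)) / L) ((b - (1 - L)) / L)))) ^ 2

namespace L2SelfSimilarBound

variable {L : ℝ} {ν : Measure ℝ}

lemma exists_boundary_le [IsFiniteMeasure ν] [NullSingletonClass ν]
    (hrec : L2SelfSimilarBound L ν) (hL : 1 / 4 ≤ L) (hL1 : L < 1) (hν : ν (Icc 0 1)ᶜ = 0) :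
    ∃ K, 0 ≤ K ∧ ∀ (n : ℕ) (v : ℝ), v ≤ L ^ n →
      ν.real (Icc 0 v) ≤ K * (4 * L)⁻¹ ^ n ∧ ν.real (Icc (1 - v) 1) ≤ K * (4 * L)⁻¹ ^ n := by
  have hL0 : 0 < L := by linarith
  have hq0 : 0 < (4 * L)⁻¹ := by positivity
  have hq1 : (4 * L)⁻¹ ≤ 1 := inv_le_one_of_one_le₀ (by linarith)
  have hY : ∀ s, ν.real s ≤ ν.real univ := fun s => measureReal_mono (subset_univ s)
  obtain ⟨K₀, hK₀, hleft⟩ := exists_le_mul_pow_of_le_mul_comp_div hL0 hL1 hq0 hq1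
    (sub_pos.2 hL1) (fun v => hY (Icc 0 v)) fun v hv => by
      have hzero : ν.real (Icc ((0 - (1 - L)) / L) ((v - (1 - L)) / L)) = 0 := by
        rw [measureReal_Icc_eq_max_min hν]
        exact measureReal_Icc_of_le ((min_le_left _ _).trans
          ((div_nonpos_of_nonpos_of_nonneg (by linarith) hL0.le).trans (le_max_right _ _)))
      have := hrec 0 v
      rwa [hzero, Real.sqrt_zero, add_zero, Real.sq_sqrt measureReal_nonneg, zero_div] at this
  obtain ⟨K₁, hK₁, hright⟩ := exists_le_mul_pow_of_le_mul_comp_div hL0 hL1 hq0 hq1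
    (sub_pos.2 hL1) (fun u => hY (Icc (1 - u) 1)) fun u hu => by
      have hzero : ν.real (Icc ((1 - u) / L) (1 / L)) = 0 := by
        rw [measureReal_Icc_eq_max_min hν]
        refine measureReal_Icc_of_le ((min_le_right _ _).trans (le_trans ?_ (le_max_left _ _)))
        rw [le_div_iff₀ hL0]; linarith
      have h₁ : (1 - u - (1 - L)) / L = 1 - u / L := by field_simp; ring
      have h₂ : (1 - (1 - L)) / L = 1 := by field_simp; ring
      have := hrec (1 - u) 1
      rwa [hzero, h₁, h₂, Real.sqrt_zero, zero_add, Real.sq_sqrt measureReal_nonneg] at this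
  refine ⟨max K₀ K₁, le_max_of_le_left hK₀, fun n v hv => ⟨?_, ?_⟩⟩
  · exact (hleft n v hv).trans (by gcongr; exact le_max_left _ _)
  · exact (hright n v hv).trans (by gcongr; exact le_max_right _ _)

end L2SelfSimilarBound

/-- An interval cut down to `[0,1]` is either longer than `ℓ`, or an initial or final segment of
length at most `ℓ`. -/
lemma sqrt_measureReal_Icc_le_of_bounds {μ ν : Measure ℝ} (hμ : μ (Icc 0 1)ᶜ = 0)
    (hν : ν (Icc 0 1)ᶜ = 0) {ℓ G B : ℝ} (hG : 0 ≤ G)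
    (hinner : ∀ a b, 0 ≤ a → b ≤ 1 → ℓ < b - a → ν.real (Icc a b) ≤ (G * μ.real (Icc a b)) ^ 2)
    (hleft : ∀ v ≤ ℓ, ν.real (Icc 0 v) ≤ B) (hright : ∀ u ≤ ℓ, ν.real (Icc (1 - u) 1) ≤ B)
    {a b : ℝ} (hab : ℓ < b - a) :
    √(ν.real (Icc a b)) ≤ G * μ.real (Icc a b) + √B := by
  rw [measureReal_Icc_eq_max_min hμ, measureReal_Icc_eq_max_min hν]
  have hGμ : 0 ≤ G * μ.real (Icc (max a 0) (min b 1)) := mul_nonneg hG measureReal_nonneg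
  by_cases hlong : ℓ < min b 1 - max a 0
  · have := hinner _ _ (le_max_right _ _) (min_le_right _ _) hlong
    rw [← Real.sqrt_le_sqrt_iff (by positivity), Real.sqrt_sq hGμ] at this
    linarith [Real.sqrt_nonneg B]
  suffices ν.real (Icc (max a 0) (min b 1)) ≤ B by linarith [Real.sqrt_le_sqrt this]
  replace hlong := not_lt.1 hlong
  rcases le_total a 0 with ha | ha
  · rw [max_eq_right ha] at hlong ⊢
    exact hleft _ (by linarith)
  · have hb : 1 < b := by
      by_contra! hb
      rw [max_eq_left ha, min_eq_left hb] at hlong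
      linarith
    rw [max_eq_left ha, min_eq_right hb.le] at hlong ⊢
    simpa using hright (1 - a) (by linarith)

namespace IsBernoulliConvolution

variable {L : ℝ} {μ : Measure ℝ}

lemma measure_compl_Icc (hμ : IsBernoulliConvolution L μ) : μ (Icc 0 1)ᶜ = 0 := by
  obtain ⟨hprob, h01, -⟩ := hμ
  rw [measure_compl measurableSet_Icc (measure_ne_top μ _), h01, measure_univ, tsub_self]

lemma measureReal_Icc_zero_one (hμ : IsBernoulliConvolution L μ) : μ.real (Icc 0 1) = 1 := by
  rw [measureReal_def, hμ.2.1, ENNReal.toReal_one]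

lemma measure_eq (hμ : IsBernoulliConvolution L μ) {A : Set ℝ} (hA : MeasurableSet A) :
    μ A = 2⁻¹ * μ ((L * ·) ⁻¹' A) + 2⁻¹ * μ ((fun x => L * x + (1 - L)) ⁻¹' A) := by
  conv_lhs => rw [hμ.2.2]
  simp only [add_sub_assoc]
  rw [Measure.add_apply, Measure.smul_apply, Measure.smul_apply,
    Measure.map_apply (by fun_prop) hA, Measure.map_apply (by fun_prop) hA, one_div, smul_eq_mul,
    smul_eq_mul]

lemma measureReal_Icc_eq (hμ : IsBernoulliConvolution L μ) (hL : 0 < L) (a b : ℝ) :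
    μ.real (Icc a b) = (μ.real (Icc (a / L) (b / L)) +
      μ.real (Icc ((a - (1 - L)) / L) ((b - (1 - L)) / L))) / 2 := by
  have := hμ.1
  rw [measureReal_def, hμ.measure_eq measurableSet_Icc, preimage_const_mul_Icc₀ _ _ hL,
    preimage_affine_Icc hL, ENNReal.toReal_add (by finiteness) (by finiteness),
    ENNReal.toReal_mul, ENNReal.toReal_mul]
  simp only [ENNReal.toReal_inv, ENNReal.toReal_ofNat, measureReal_def]
  ring

lemma inv_two_pow_le_measureReal_Icc_zero (hμ : IsBernoulliConvolution L μ) (hL : 0 < L)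
    (k : ℕ) {u : ℝ} (hu : L ^ k ≤ u) : (2 ^ k)⁻¹ ≤ μ.real (Icc 0 u) := by
  have := hμ.1
  induction k generalizing u with
  | zero =>
    rw [pow_zero] at hu
    have := measureReal_mono (μ := μ) (Icc_subset_Icc_right hu : Icc (0 : ℝ) 1 ⊆ Icc 0 u)
    rwa [hμ.measureReal_Icc_zero_one, ← inv_one, ← pow_zero 2] at this
  | succ k ih =>
    have hk : (2 ^ k)⁻¹ ≤ μ.real (Icc 0 (u / L)) := ih (by rwa [le_div_iff₀ hL, ← pow_succ])
    rw [hμ.measureReal_Icc_eq hL, zero_div, pow_succ, mul_inv]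
    linarith [measureReal_nonneg (μ := μ) (s := Icc ((0 - (1 - L)) / L) ((u - (1 - L)) / L))]

/-- If `I ⊆ [0,1]` lies in `[0,L]` or in `[1-L,1]`, one of its preimages is an interval in `[0,1]`
of length `|I|/L`; otherwise `I` contains the overlap `[1-L,L]`, whose mass is bounded below. -/
lemma exists_div_two_pow_le_measureReal_Icc (hμ : IsBernoulliConvolution L μ) (hL : 1 / 2 < L)
    (hL1 : L < 1) : ∃ c > 0, ∀ (k : ℕ) (a b : ℝ), 0 ≤ a → b ≤ 1 → L ^ k ≤ b - a →
      c / 2 ^ k ≤ μ.real (Icc a b) := by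
  have hL0 : 0 < L := by linarith
  obtain ⟨k₀, hk₀⟩ := exists_pow_lt_of_lt_one (show 0 < (2 * L - 1) / L by
    apply div_pos <;> linarith) hL1
  refine ⟨(2 ^ (k₀ + 1))⁻¹, by positivity, fun k => ?_⟩
  induction k with
  | zero =>
    intro a b ha hb hab
    obtain ⟨rfl, rfl⟩ : a = 0 ∧ b = 1 := by constructor <;> linarith [pow_zero L]
    rw [hμ.measureReal_Icc_zero_one, pow_zero, div_one]
    exact inv_le_one_of_one_le₀ (one_le_pow₀ one_le_two)
  | succ k ih =>
    intro a b ha hb hab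
    have hab' : L ^ k ≤ b / L - a / L := by
      rw [← sub_div, le_div_iff₀ hL0, ← pow_succ]; exact hab
    have hchild : (2 ^ (k₀ + 1))⁻¹ / 2 ^ k ≤ μ.real (Icc (a / L) (b / L)) ∨
        (2 ^ (k₀ + 1))⁻¹ / 2 ^ k ≤ μ.real (Icc ((a - (1 - L)) / L) ((b - (1 - L)) / L)) := by
      by_cases hbL : b ≤ L
      · exact .inl (ih _ _ (by positivity) (by rwa [div_le_one hL0]) hab')
      by_cases haL : 1 - L ≤ a
      · refine .inr (ih _ _ (div_nonneg (by linarith) hL0.le) ?_ ?_)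
        · rw [div_le_one hL0]; linarith
        · rwa [← sub_div, sub_sub_sub_cancel_right, ← div_sub_div_same]
      refine .inr (le_trans ?_ (measureReal_mono (Icc_subset_Icc_left
        (div_nonpos_of_nonpos_of_nonneg (by linarith) hL0.le)) (by have := hμ.1; finiteness)))
      calc (2 ^ (k₀ + 1))⁻¹ / 2 ^ k ≤ (2 ^ k₀)⁻¹ := by
            rw [pow_succ, mul_inv, div_eq_mul_inv]
            have : (2 ^ k : ℝ)⁻¹ ≤ 1 := inv_le_one_of_one_le₀ (one_le_pow₀ one_le_two)
            nlinarith [inv_pos.2 (by positivity : (0:ℝ) < 2 ^ k₀)]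
        _ ≤ μ.real (Icc 0 ((b - (1 - L)) / L)) := by
            refine hμ.inv_two_pow_le_measureReal_Icc_zero hL0 k₀ (hk₀.le.trans ?_)
            exact div_le_div_of_nonneg_right (by linarith [not_le.1 hbL]) hL0.le
    have := hμ.measureReal_Icc_eq hL0 a b
    rw [pow_succ (2 : ℝ) k, ← div_div]
    rcases hchild with h | h <;>
      linarith [measureReal_nonneg (μ := μ) (s := Icc (a / L) (b / L)),
        measureReal_nonneg (μ := μ) (s := Icc ((a - (1 - L)) / L) ((b - (1 - L)) / L))]

lemma ae_eq_density (hμ : IsBernoulliConvolution L μ) (hL : 0 < L) {H : ℝ → ℝ≥0∞}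
    (hH : Measurable H) (hdens : μ = volume.withDensity H) :
    H =ᵐ[volume] fun x => (2 * ENNReal.ofReal L)⁻¹ * (H (x / L) + H ((x - (1 - L)) / L)) := by
  refine ae_eq_of_forall_setLIntegral_eq_of_sigmaFinite hH (by fun_prop) fun A hA _ => ?_
  have h₁ := setLIntegral_comp_div_sub hL 0 hA H
  simp only [sub_zero, add_zero] at h₁
  rw [← withDensity_apply _ hA, ← hdens, hμ.measure_eq hA, lintegral_const_mul _ (by fun_prop),
    lintegral_add_left (by fun_prop), h₁, setLIntegral_comp_div_sub hL (1 - L) hA, hdens,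
    withDensity_apply _ (hA.preimage (by fun_prop)),
    withDensity_apply _ (hA.preimage (by fun_prop)), ← mul_add, ← mul_add (ENNReal.ofReal L), ← mul_assoc, ENNReal.mul_inv (by simp) (by simp),
    mul_assoc _ _ (ENNReal.ofReal L),
    ENNReal.inv_mul_cancel (by simpa using hL) ENNReal.ofReal_ne_top, mul_one]

lemma l2SelfSimilarBound (hμ : IsBernoulliConvolution L μ) (hL : 0 < L) {h : ℝ → ℝ}
    (hmeas : Measurable h) (hnn : ∀ x, 0 ≤ h x)
    (hdens : μ = volume.withDensity fun x => ENNReal.ofReal (h x)) {ν : Measure ℝ}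
    [IsFiniteMeasure ν] (hν : ν = volume.withDensity fun x => ENNReal.ofReal (h x ^ 2)) :
    L2SelfSimilarBound L ν := by
  intro a b
  have hνA : ∀ A, MeasurableSet A → ν A = ∫⁻ x in A, ENNReal.ofReal (h x) ^ 2 := fun A hA => by
    simp_rw [hν, withDensity_apply _ hA, ENNReal.ofReal_pow (hnn _)]
  have key := lintegral_sq_le_of_ae_eq hL hmeas.ennreal_ofReal
    (hμ.ae_eq_density hL hmeas.ennreal_ofReal hdens) (measurableSet_Icc (a := a) (b := b))
  rw [← hνA _ measurableSet_Icc, ← hνA _ (measurableSet_Icc.preimage (by fun_prop)),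
    ← hνA _ (measurableSet_Icc.preimage (by fun_prop)), preimage_const_mul_Icc₀ _ _ hL,
    preimage_affine_Icc hL] at key
  refine ENNReal.toReal_le_of_le_ofReal (by positivity) (key.trans_eq ?_)
  have hsqrt : ∀ s, ν s ^ (1 / 2 : ℝ) = ENNReal.ofReal √(ν.real s) := fun s => by
    rw [Real.sqrt_eq_rpow, ← ENNReal.ofReal_rpow_of_nonneg measureReal_nonneg (by norm_num),
      ofReal_measureReal]
  rw [hsqrt, hsqrt, ← ENNReal.ofReal_add (Real.sqrt_nonneg _) (Real.sqrt_nonneg _),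
    ← ENNReal.ofReal_pow (by positivity), ENNReal.ofReal_mul (by positivity),
    ENNReal.ofReal_inv_of_pos (by positivity), ENNReal.ofReal_mul zero_le_four,
    ENNReal.ofReal_ofNat]

lemma measureReal_Icc_le_of_bounds (hμ : IsBernoulliConvolution L μ) (hL : 0 < L)
    {ν : Measure ℝ} (hν : ν (Icc 0 1)ᶜ = 0) (hrec : L2SelfSimilarBound L ν) {ℓ G B s : ℝ}
    (hG : 0 ≤ G)
    (hinner : ∀ a b, 0 ≤ a → b ≤ 1 → ℓ < b - a → ν.real (Icc a b) ≤ (G * μ.real (Icc a b)) ^ 2)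
    (hleft : ∀ v ≤ ℓ, ν.real (Icc 0 v) ≤ B) (hright : ∀ u ≤ ℓ, ν.real (Icc (1 - u) 1) ≤ B)
    {a b : ℝ} (hab : L * ℓ < b - a) (hB : √B ≤ (s - 1) * G * μ.real (Icc a b)) :
    ν.real (Icc a b) ≤ (4 * L)⁻¹ * (2 * s * G * μ.real (Icc a b)) ^ 2 := by
  have hpiece := fun a' b' (h : ℓ < b' - a') => sqrt_measureReal_Icc_le_of_bounds
    hμ.measure_compl_Icc hν hG hinner hleft hright h
  have h₁ := hpiece (a / L) (b / L) (by rwa [← sub_div, lt_div_iff₀ hL, mul_comm])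
  have h₂ := hpiece ((a - (1 - L)) / L) ((b - (1 - L)) / L)
    (by rwa [← sub_div, sub_sub_sub_cancel_right, lt_div_iff₀ hL, mul_comm])
  have hsplit : G * μ.real (Icc (a / L) (b / L)) +
      G * μ.real (Icc ((a - (1 - L)) / L) ((b - (1 - L)) / L)) = 2 * G * μ.real (Icc a b) := by
    rw [hμ.measureReal_Icc_eq hL a b]; ring
  refine (hrec a b).trans (mul_le_mul_of_nonneg_left (pow_le_pow_left₀ (by positivity) ?_ 2)
    (by positivity))
  linarith

theorem exists_measureReal_Icc_le_mul_pow_mul_sq (hμ : IsBernoulliConvolution L μ)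
    (hL : 1 / 2 < L) (hL1 : L < 1) {ν : Measure ℝ} [IsFiniteMeasure ν] [NullSingletonClass ν]
    (hν : ν (Icc 0 1)ᶜ = 0) (hrec : L2SelfSimilarBound L ν) {θ : ℝ} (hθ : L⁻¹ < θ) :
    ∃ C, 0 ≤ C ∧ ∀ (n : ℕ) (a b : ℝ), 0 ≤ a → b ≤ 1 → L ^ n < b - a →
      ν.real (Icc a b) ≤ C * θ ^ n * μ.real (Icc a b) ^ 2 := by
  have hL0 : 0 < L := by linarith
  have hθ0 : 0 < θ := (inv_pos.2 hL0).trans hθ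
  obtain ⟨c, hc, hmass⟩ := hμ.exists_div_two_pow_le_measureReal_Icc hL hL1
  obtain ⟨K, hK, hbdry⟩ := hrec.exists_boundary_le (by linarith) hL1 hν
  set σ := L * θ with hσ
  have hσ1 : 1 < √σ := by
    rw [Real.lt_sqrt zero_le_one, one_pow, hσ, ← inv_mul_lt_iff₀ hL0, mul_one]; exact hθ
  set C := 4 * K / ((√σ - 1) ^ 2 * c ^ 2)
  refine ⟨C, by positivity, fun n => ?_⟩
  induction n with
  | zero =>
    intro a b ha hb hab
    rw [pow_zero] at hab
    linarith
  | succ n ih =>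
    intro a b ha hb hab
    set G := √(C * θ ^ n)
    set M := μ.real (Icc a b)
    have hG : G ^ 2 = C * θ ^ n := Real.sq_sqrt (by positivity)
    have hM : c / 2 ^ (n + 1) ≤ M := hmass _ _ _ ha hb hab.le
    have hB : √(K * (4 * L)⁻¹ ^ n) ≤ (√σ - 1) * G * M :=
      sqrt_mul_inv_four_mul_pow_le hL0 hθ.le hc hK hσ1 n hM
    calc ν.real (Icc a b) ≤ (4 * L)⁻¹ * (2 * √σ * G * M) ^ 2 :=
          hμ.measureReal_Icc_le_of_bounds hL0 hν hrec (Real.sqrt_nonneg _)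
            (fun a b ha hb hab => (ih a b ha hb hab).trans_eq (by rw [mul_pow, hG]))
            (fun v hv => (hbdry n v hv).1) (fun u hu => (hbdry n u hu).2)
            (by rwa [← pow_succ']) hB
      _ = C * θ ^ (n + 1) * M ^ 2 := by
          rw [mul_pow, mul_pow, mul_pow, hG, Real.sq_sqrt (by positivity), hσ]
          field_simp
          ring

end IsBernoulliConvolution

theorem stmt8 (lam : ℝ) (hlam : lam ∈ Set.Ioo (1 / 2 : ℝ) 1)
    (μ : Measure ℝ) (hμ : IsBernoulliConvolution lam μ)
    (h : ℝ → ℝ) (hmeas : Measurable h) (hnn : ∀ x, 0 ≤ h x)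
    (hdens : μ = volume.withDensity (fun x => ENNReal.ofReal (h x)))
    (hL2 : MemLp h 2 volume) :
    ∀ ε : ℝ, 0 < ε → ∃ C : ℝ, ∀ a b : ℝ, 0 ≤ a → a ≤ b → b ≤ 1 →
      (b - a) ^ (1 + ε) * ∫ x in Set.Icc a b, (h x) ^ 2 ≤
        C * (∫ x in Set.Icc a b, h x) ^ 2 := by
  intro ε hε
  obtain ⟨hL, hL1⟩ := hlam
  have hL0 : 0 < lam := by linarith
  set ν := volume.withDensity fun x => ENNReal.ofReal (h x ^ 2) with hν
  have : IsFiniteMeasure ν := isFiniteMeasure_withDensity_ofReal hL2.integrable_sq.2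
  have hνμ : ν ≪ μ := hdens ▸ withDensity_ofReal_sq_absolutelyContinuous hmeas hnn
  set θ := (lam ^ (1 + ε))⁻¹
  obtain ⟨C, hC0, hC⟩ := hμ.exists_measureReal_Icc_le_mul_pow_mul_sq hL hL1
    (hνμ hμ.measure_compl_Icc) (hμ.l2SelfSimilarBound hL0 hmeas hnn hdens hν) (θ := θ)
    ((inv_lt_inv₀ hL0 (by positivity)).2 (Real.rpow_lt_self_of_lt_one hL0 hL1 (by linarith)))
  refine ⟨C * θ, fun a b ha hab hb => ?_⟩
  rw [setIntegral_eq_measureReal_withDensity (hmeas.pow_const 2) (fun x => sq_nonneg (h x))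
    measurableSet_Icc, setIntegral_eq_measureReal_withDensity hmeas hnn measurableSet_Icc, ← hdens]
  rcases hab.eq_or_lt with rfl | hlt
  · rw [sub_self, Real.zero_rpow (by linarith), zero_mul]
    positivity
  obtain ⟨n, hn₁, hn₂⟩ := exists_nat_pow_near_of_lt_one (sub_pos.2 hlt) (by linarith) hL0 hL1
  calc (b - a) ^ (1 + ε) * ν.real (Icc a b)
      ≤ (b - a) ^ (1 + ε) * (C * θ ^ (n + 1) * μ.real (Icc a b) ^ 2) := by
        gcongr
        exact hC _ a b ha hb hn₁
    _ = C * ((b - a) ^ (1 + ε) * θ ^ (n + 1)) * μ.real (Icc a b) ^ 2 := by ring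
    _ ≤ C * θ * μ.real (Icc a b) ^ 2 := by
        gcongr
        exact rpow_mul_inv_rpow_pow_le hL0 (by linarith) (by linarith) hn₂
end

section
/- Let λ ∈ (1/2, 1) and set θ = −log 2 / log λ. Then there is a constant K > 0 such that for every r with 0 < r ≤ 1 − λ, (K/2) · (1 − λ)^{−θ} · r^θ ≤ μ_λ([0, r)) ≤ 2K · (1 − λ)^{−θ} · r^θ. -/
open MeasureTheory Filter Set
open scoped ENNReal

/-!
Write `F r = μ [0, r)`. Since `μ` lives on `[0, 1]`, the branch `S₂` maps it into `[1 - λ, 1]`,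
so when `λ s ≤ 1 - λ` only `S₁` contributes to `F (λ s)` and `F (λ s) = F s / 2`. Iterating,
`F (λⁿ s) = 2⁻ⁿ F s` for `s ∈ (λ (1 - λ), 1 - λ]`, where `F s` lies between
`F (λ (1 - λ)) = F (1 - λ) / 2` and `F (1 - λ)`; the latter is positive because in general
`F (λⁿ s) ≥ 2⁻ⁿ F s` and `F s = 1` for `s > 1`. Every `r ∈ (0, 1 - λ]` is such a `λⁿ s`, and as
`λ ^ θ = 1 / 2` the factor `2⁻ⁿ = (λⁿ) ^ θ` is within a factor `2` of `(r / (1 - λ)) ^ θ`.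
-/

lemma Real.rpow_neg_log_two_div_log {a : ℝ} (ha₀ : 0 < a) (ha₁ : a ≠ 1) :
    a ^ (-Real.log 2 / Real.log a) = 2⁻¹ := by
  have hlog : Real.log a ≠ 0 := Real.log_ne_zero_of_pos_of_ne_one ha₀ ha₁
  rw [Real.rpow_def_of_pos ha₀, mul_div_cancel₀ _ hlog, Real.exp_neg, Real.exp_log two_pos]

lemma Real.rpow_neg_log_two_div_log_mem_Icc_of_pow_succ_lt_of_le_pow {a t : ℝ} {n : ℕ}
    (ha₀ : 0 < a) (ha₁ : a < 1) (hlt : a ^ (n + 1) < t) (hle : t ≤ a ^ n) :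
    t ^ (-Real.log 2 / Real.log a) ∈ Icc ((2⁻¹ : ℝ) ^ (n + 1)) (2⁻¹ ^ n) := by
  have hθ : 0 ≤ -Real.log 2 / Real.log a :=
    div_nonneg_of_nonpos (neg_nonpos.2 (Real.log_nonneg one_le_two))
      (Real.log_nonpos ha₀.le ha₁.le)
  have hpow (m : ℕ) : (a ^ m) ^ (-Real.log 2 / Real.log a) = (2⁻¹ : ℝ) ^ m := by
    rw [← Real.rpow_pow_comm ha₀.le, Real.rpow_neg_log_two_div_log ha₀ ha₁.ne]
  rw [← hpow, ← hpow]
  exact ⟨Real.rpow_le_rpow (by positivity) hlt.le hθ,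
    Real.rpow_le_rpow ((pow_pos ha₀ _).trans hlt).le hle hθ⟩

namespace IsBernoulliConvolution

variable {lam : ℝ} {μ : Measure ℝ}

lemma measure_Iio_zero (hμ : IsBernoulliConvolution lam μ) : μ (Iio 0) = 0 := by
  obtain ⟨_, hIcc, -⟩ := hμ
  have hcompl : μ (Icc 0 1)ᶜ = 0 := by
    rw [measure_compl measurableSet_Icc (measure_ne_top μ _), hIcc, measure_univ, tsub_self]
  have hsub : Iio 0 ⊆ (Icc (0 : ℝ) 1)ᶜ := fun _ hx h => (h.1.trans_lt hx).false
  exact measure_mono_null hsub hcompl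

lemma measure_Ico_zero_eq (hμ : IsBernoulliConvolution lam μ) (r : ℝ) :
    μ (Ico 0 r) = 2⁻¹ * μ ((lam * ·) ⁻¹' Ico 0 r) +
      2⁻¹ * μ ((fun x => lam * x + 1 - lam) ⁻¹' Ico 0 r) := by
  conv_lhs => rw [hμ.2.2]
  rw [Measure.add_apply, Measure.smul_apply, Measure.smul_apply,
    Measure.map_apply (by fun_prop) measurableSet_Ico,
    Measure.map_apply (by fun_prop) measurableSet_Ico, one_div, smul_eq_mul, smul_eq_mul]

lemma inv_two_mul_measure_Ico_le_const_mul (hμ : IsBernoulliConvolution lam μ) (hl₀ : 0 < lam)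
    (s : ℝ) :
    2⁻¹ * μ (Ico 0 s) ≤ μ (Ico 0 (lam * s)) := by
  rw [hμ.measure_Ico_zero_eq (lam * s), preimage_const_mul_Ico₀ _ _ hl₀, zero_div,
    mul_div_cancel_left₀ _ hl₀.ne']
  exact le_self_add

lemma measure_Ico_const_mul_eq (hμ : IsBernoulliConvolution lam μ) (hl₀ : 0 < lam) {s : ℝ}
    (hs : lam * s ≤ 1 - lam) : μ (Ico 0 (lam * s)) = 2⁻¹ * μ (Ico 0 s) := by
  have hnull : μ ((fun x => lam * x + 1 - lam) ⁻¹' Ico 0 (lam * s)) = 0 :=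
    measure_mono_null (fun x hx => neg_of_mul_neg_right (by linarith [hx.2]) hl₀.le)
      hμ.measure_Iio_zero
  rw [hμ.measure_Ico_zero_eq, hnull, mul_zero, add_zero, preimage_const_mul_Ico₀ _ _ hl₀,
    zero_div, mul_div_cancel_left₀ _ hl₀.ne']

lemma inv_two_pow_mul_measure_Ico_le_pow_mul (hμ : IsBernoulliConvolution lam μ) (hl₀ : 0 < lam)
    (n : ℕ) (s : ℝ) : 2⁻¹ ^ n * μ (Ico 0 s) ≤ μ (Ico 0 (lam ^ n * s)) := by
  induction n with
  | zero => simp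
  | succ n ih =>
    calc 2⁻¹ ^ (n + 1) * μ (Ico 0 s) = 2⁻¹ * (2⁻¹ ^ n * μ (Ico 0 s)) := by ring
      _ ≤ 2⁻¹ * μ (Ico 0 (lam ^ n * s)) := by gcongr
      _ ≤ μ (Ico 0 (lam ^ (n + 1) * s)) := by
        rw [pow_succ', mul_assoc]; exact hμ.inv_two_mul_measure_Ico_le_const_mul hl₀ _

lemma measure_Ico_pow_mul_eq (hμ : IsBernoulliConvolution lam μ) (hl₀ : 0 < lam)
    (hl₁ : lam ≤ 1) {s : ℝ} (hs₀ : 0 ≤ s) (hs : s ≤ 1 - lam) (n : ℕ) :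
    μ (Ico 0 (lam ^ n * s)) = 2⁻¹ ^ n * μ (Ico 0 s) := by
  induction n with
  | zero => simp
  | succ n ih =>
    have hle : lam * (lam ^ n * s) ≤ 1 - lam := by
      rw [← mul_assoc, ← pow_succ']
      exact (mul_le_of_le_one_left hs₀ (pow_le_one₀ hl₀.le hl₁)).trans hs
    rw [pow_succ', mul_assoc, hμ.measure_Ico_const_mul_eq hl₀ hle, ih, pow_succ', mul_assoc]

lemma measure_Ico_zero_pos (hμ : IsBernoulliConvolution lam μ) (hl₀ : 0 < lam)
    (hl₁ : lam < 1) {r : ℝ} (hr : 0 < r) : 0 < μ (Ico 0 r) := by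
  obtain ⟨n, hn⟩ := exists_pow_lt_of_lt_one hr hl₁
  have hpow : 0 < lam ^ n := pow_pos hl₀ n
  have hone : 1 ≤ μ (Ico 0 (r / lam ^ n)) := by
    rw [← hμ.2.1]
    exact measure_mono fun x hx => ⟨hx.1, hx.2.trans_lt ((one_lt_div hpow).2 hn)⟩
  calc 0 < 2⁻¹ ^ n * 1 := by simpa using ENNReal.pow_pos (by simp) n
    _ ≤ 2⁻¹ ^ n * μ (Ico 0 (r / lam ^ n)) := by gcongr
    _ ≤ μ (Ico 0 r) := by
      simpa [mul_div_cancel₀ _ hpow.ne'] using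
        hμ.inv_two_pow_mul_measure_Ico_le_pow_mul hl₀ n (r / lam ^ n)

lemma measure_Ico_zero_mem_Icc (hμ : IsBernoulliConvolution lam μ) (hl₀ : 0 < lam)
    (hl₁ : lam ≤ 1) {r : ℝ} {n : ℕ} (hlt : lam ^ (n + 1) * (1 - lam) < r)
    (hle : r ≤ lam ^ n * (1 - lam)) :
    μ (Ico 0 r) ∈
      Icc (2⁻¹ ^ (n + 1) * μ (Ico 0 (1 - lam))) (2⁻¹ ^ n * μ (Ico 0 (1 - lam))) := by
  have hpow : 0 < lam ^ n := pow_pos hl₀ n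
  set s := r / lam ^ n
  have hs_le : s ≤ 1 - lam := (div_le_iff₀' hpow).2 hle
  have hs_gt : lam * (1 - lam) < s := (lt_div_iff₀' hpow).2 (by rwa [← mul_assoc, ← pow_succ])
  have hr : r = lam ^ n * s := (mul_div_cancel₀ _ hpow.ne').symm
  have hs₀ : 0 ≤ s := (mul_nonneg hl₀.le (sub_nonneg.2 hl₁)).trans hs_gt.le
  have hhalf : 2⁻¹ * μ (Ico 0 (1 - lam)) = μ (Ico 0 (lam * (1 - lam))) :=
    (hμ.measure_Ico_const_mul_eq hl₀ (mul_le_of_le_one_left (sub_nonneg.2 hl₁) hl₁)).symm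
  rw [hr, hμ.measure_Ico_pow_mul_eq hl₀ hl₁ hs₀ hs_le, pow_succ, mul_assoc, hhalf]
  exact ⟨by gcongr, by gcongr⟩

lemma toReal_measure_Ico_zero_mem_Icc (hμ : IsBernoulliConvolution lam μ) (hl₀ : 0 < lam)
    (hl₁ : lam ≤ 1) {r : ℝ} {n : ℕ} (hlt : lam ^ (n + 1) * (1 - lam) < r)
    (hle : r ≤ lam ^ n * (1 - lam)) :
    (μ (Ico 0 r)).toReal ∈ Icc (2⁻¹ ^ (n + 1) * (μ (Ico 0 (1 - lam))).toReal)
      (2⁻¹ ^ n * (μ (Ico 0 (1 - lam))).toReal) := by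
  have := hμ.1
  obtain ⟨hlow, hupp⟩ := hμ.measure_Ico_zero_mem_Icc hl₀ hl₁ hlt hle
  have hlow' := ENNReal.toReal_mono (measure_ne_top μ _) hlow
  have hupp' := ENNReal.toReal_mono (by finiteness) hupp
  simp only [ENNReal.toReal_mul, ENNReal.toReal_pow, ENNReal.toReal_inv,
    ENNReal.toReal_ofNat] at hlow' hupp'
  exact ⟨hlow', hupp'⟩

end IsBernoulliConvolution

theorem stmt9 (lam : ℝ) (hlam : lam ∈ Set.Ioo (1 / 2 : ℝ) 1)
    (μ : Measure ℝ) (hμ : IsBernoulliConvolution lam μ)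
    (θ : ℝ) (hθ : θ = -Real.log 2 / Real.log lam) :
    ∃ K : ℝ, 0 < K ∧ ∀ r : ℝ, 0 < r → r ≤ 1 - lam →
      ENNReal.ofReal (K / 2 * (1 - lam) ^ (-θ) * r ^ θ) ≤ μ (Set.Ico 0 r) ∧
        μ (Set.Ico 0 r) ≤ ENNReal.ofReal (2 * K * (1 - lam) ^ (-θ) * r ^ θ) := by
  obtain ⟨hhalf, hl₁⟩ := hlam
  have hl₀ : 0 < lam := by linarith
  have hc : 0 < 1 - lam := by linarith
  have := hμ.1
  set K := (μ (Ico 0 (1 - lam))).toReal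
  refine ⟨K, ENNReal.toReal_pos (hμ.measure_Ico_zero_pos hl₀ hl₁ hc).ne'
    (measure_ne_top μ _), fun r hr₀ hr => ?_⟩
  obtain ⟨n, hlt, hle⟩ :=
    exists_nat_pow_near_of_lt_one (div_pos hr₀ hc) ((div_le_one hc).2 hr) hl₀ hl₁
  have hθr : (1 - lam) ^ (-θ) * r ^ θ ∈ Icc ((2⁻¹ : ℝ) ^ (n + 1)) (2⁻¹ ^ n) := by
    rw [Real.rpow_neg hc.le, inv_mul_eq_div, ← Real.div_rpow hr₀.le hc.le, hθ]
    exact Real.rpow_neg_log_two_div_log_mem_Icc_of_pow_succ_lt_of_le_pow hl₀ hl₁ hlt hle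
  have hμr := hμ.toReal_measure_Ico_zero_mem_Icc hl₀ hl₁.le ((lt_div_iff₀ hc).1 hlt)
    ((div_le_iff₀ hc).1 hle)
  rw [ENNReal.ofReal_le_iff_le_toReal (measure_ne_top μ _),
    ENNReal.le_ofReal_iff_toReal_le (measure_ne_top μ _) (by positivity), mul_assoc, mul_assoc]
  constructor
  · calc K / 2 * ((1 - lam) ^ (-θ) * r ^ θ) ≤ K / 2 * 2⁻¹ ^ n := by gcongr; exact hθr.2
      _ = 2⁻¹ ^ (n + 1) * K := by ring
      _ ≤ (μ (Ico 0 r)).toReal := hμr.1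
  · calc (μ (Ico 0 r)).toReal ≤ 2⁻¹ ^ n * K := hμr.2
      _ = 2 * K * 2⁻¹ ^ (n + 1) := by ring
      _ ≤ 2 * K * ((1 - lam) ^ (-θ) * r ^ θ) := by gcongr; exact hθr.1
end

section
/- Let λ ∈ (1/2, 1) and set θ = −log 2 / log λ. Then there is a constant c > 0 such that μ_λ(I) ≥ c · |I|^θ holds for every interval I ⊆ [0,1], where |I| denotes the length of I. -/
open MeasureTheory Filter Set
open scoped ENNReal

/-! Since `λ ≥ 1/2`, the two images `S₁[0,1] = [0,λ]` and `S₂[0,1] = [1-λ,1]` cover `[0,1]`, so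
by induction every point of `[0,1]` lies in an interval of length `λⁿ` (an image of `[0,1]`
under an `n`-fold composition of the `Sᵢ`) of mass at least `2⁻ⁿ`. An interval `I` of length
`|I| ≈ 2λⁿ` contains such an interval, and `2⁻ⁿ = (λⁿ)^θ ≥ (λ|I|/2)^θ`. -/

open Real

lemma affine_mem_Icc {lam d x ℓ s : ℝ} (hlam : 0 ≤ lam) (hs : s ∈ Icc x (x + ℓ)) :
    lam * s + d ∈ Icc (lam * x + d) (lam * x + d + lam * ℓ) := by
  obtain ⟨h₁, h₂⟩ := hs
  constructor <;> nlinarith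

lemma mul_measure_preimage_le_of_eq_smul_map_add {α : Type*} [MeasurableSpace α]
    {μ ν : Measure α} {c : ℝ≥0∞} {f : α → α} (hf : Measurable f) (h : μ = c • μ.map f + ν)
    {B : Set α} (hB : MeasurableSet B) : c * μ (f ⁻¹' B) ≤ μ B := by
  conv_rhs => rw [h]
  rw [Measure.add_apply, Measure.smul_apply, Measure.map_apply hf hB, smul_eq_mul]
  exact le_self_add

lemma rpow_neg_log_two_div_log {lam : ℝ} (h₀ : 0 < lam) (h₁ : lam ≠ 1) :
    lam ^ (-log 2 / log lam) = 1 / 2 := by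
  rw [← log_inv, ← logb, rpow_logb h₀ h₁ (by norm_num), one_div]

namespace IsBernoulliConvolution

variable {lam : ℝ} {μ : Measure ℝ}

lemma half_mul_measure_preimage_le (hμ : IsBernoulliConvolution lam μ) {d : ℝ}
    (hd : d = 0 ∨ d = 1 - lam) {B : Set ℝ} (hB : MeasurableSet B) :
    1 / 2 * μ ((fun x => lam * x + d) ⁻¹' B) ≤ μ B := by
  have hf : Measurable fun x : ℝ => lam * x + d := by fun_prop
  obtain ⟨-, -, h⟩ := hμ
  rcases hd with rfl | rfl
  · simp only [add_zero] at hf ⊢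
    exact mul_measure_preimage_le_of_eq_smul_map_add hf h hB
  · have hS₂ : (fun x : ℝ => lam * x + 1 - lam) = fun x => lam * x + (1 - lam) := by
      ext; ring
    rw [hS₂, add_comm] at h
    exact mul_measure_preimage_le_of_eq_smul_map_add hf h hB

lemma half_pow_succ_le_measure_affine_Icc (hμ : IsBernoulliConvolution lam μ)
    (hlam : 0 ≤ lam) {d : ℝ} (hd : d = 0 ∨ d = 1 - lam) {n : ℕ} {x ℓ : ℝ}
    (hx : (1 / 2 : ℝ≥0∞) ^ n ≤ μ (Icc x (x + ℓ))) :
    (1 / 2 : ℝ≥0∞) ^ (n + 1) ≤ μ (Icc (lam * x + d) (lam * x + d + lam * ℓ)) :=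
  calc (1 / 2 : ℝ≥0∞) ^ (n + 1) = 1 / 2 * (1 / 2) ^ n := pow_succ' _ _
    _ ≤ 1 / 2 * μ ((fun y => lam * y + d) ⁻¹' Icc (lam * x + d) (lam * x + d + lam * ℓ)) := by
      gcongr
      exact hx.trans (measure_mono fun s hs => affine_mem_Icc hlam hs)
    _ ≤ _ := hμ.half_mul_measure_preimage_le hd measurableSet_Icc

lemma exists_mem_Icc_half_pow_le_measure (hμ : IsBernoulliConvolution lam μ)
    (hlam : lam ∈ Ioo (1 / 2) 1) (n : ℕ) {t : ℝ} (ht : t ∈ Icc 0 1) :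
    ∃ x, t ∈ Icc x (x + lam ^ n) ∧ (1 / 2 : ℝ≥0∞) ^ n ≤ μ (Icc x (x + lam ^ n)) := by
  induction n generalizing t with
  | zero => exact ⟨0, by simpa using ht, by simpa using hμ.2.1.ge⟩
  | succ n ih =>
    have hl₀ : 0 < lam := by linarith [hlam.1]
    obtain ⟨d, hd, hdt⟩ : ∃ d, (d = 0 ∨ d = 1 - lam) ∧ t - d ∈ Icc 0 lam := by
      by_cases h : t ≤ lam
      · exact ⟨0, .inl rfl, by simpa using ⟨ht.1, h⟩⟩
      · exact ⟨1 - lam, .inr rfl, by constructor <;> linarith [ht.2, hlam.1]⟩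
    obtain ⟨x, hxt, hx⟩ := ih ⟨div_nonneg hdt.1 hl₀.le, (div_le_one hl₀).2 hdt.2⟩
    refine ⟨lam * x + d, ?_, ?_⟩
    · have := affine_mem_Icc (d := d) hl₀.le hxt
      rwa [mul_div_cancel₀ _ hl₀.ne', sub_add_cancel, ← pow_succ'] at this
    · rw [pow_succ' lam]
      exact hμ.half_pow_succ_le_measure_affine_Icc hl₀.le hd hx

lemma half_pow_le_measure_Icc (hμ : IsBernoulliConvolution lam μ) (hlam : lam ∈ Ioo (1 / 2) 1)
    {a b : ℝ} (ha : 0 ≤ a) (hb : b ≤ 1) {n : ℕ} (hn : 2 * lam ^ n ≤ b - a) :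
    (1 / 2 : ℝ≥0∞) ^ n ≤ μ (Icc a b) := by
  have hpow : 0 ≤ lam ^ n := pow_nonneg (by linarith [hlam.1]) n
  obtain ⟨x, hxt, hx⟩ :=
    hμ.exists_mem_Icc_half_pow_le_measure hlam n (t := a + lam ^ n) ⟨by linarith, by linarith⟩
  exact hx.trans (measure_mono (Icc_subset_Icc (by linarith [hxt.2]) (by linarith [hxt.1])))

end IsBernoulliConvolution

theorem stmt10 (lam : ℝ) (hlam : lam ∈ Set.Ioo (1 / 2 : ℝ) 1)
    (μ : Measure ℝ) (hμ : IsBernoulliConvolution lam μ)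
    (θ : ℝ) (hθ : θ = -Real.log 2 / Real.log lam) :
    ∃ c : ℝ, 0 < c ∧ ∀ a b : ℝ, 0 ≤ a → a ≤ b → b ≤ 1 →
      ENNReal.ofReal (c * (b - a) ^ θ) ≤ μ (Set.Icc a b) := by
  obtain ⟨hl₂, hl₁⟩ := hlam
  have hl₀ : 0 < lam := by linarith
  have hθpos : 0 < θ :=
    hθ ▸ div_pos_of_neg_of_neg (neg_neg_of_pos (log_pos one_lt_two)) (log_neg hl₀ hl₁)
  have hlamθ : lam ^ θ = 1 / 2 := hθ ▸ rpow_neg_log_two_div_log hl₀ hl₁.ne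
  refine ⟨(lam / 2) ^ θ, by positivity, fun a b ha hab hb => ?_⟩
  rcases hab.eq_or_lt with rfl | hlt
  · simp [zero_rpow hθpos.ne']
  obtain ⟨n, hn₁, hn⟩ :=
    exists_nat_pow_near_of_lt_one (x := (b - a) / 2) (by linarith) (by linarith) hl₀ hl₁
  calc ENNReal.ofReal ((lam / 2) ^ θ * (b - a) ^ θ)
      = ENNReal.ofReal ((lam * ((b - a) / 2)) ^ θ) := by
        rw [← mul_rpow (by positivity) (by linarith)]; ring_nf
    _ ≤ ENNReal.ofReal ((lam ^ (n + 1)) ^ θ) := by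
        gcongr; rw [pow_succ']; gcongr
    _ = (1 / 2) ^ (n + 1) := by
        rw [← rpow_pow_comm hl₀.le, hlamθ, ENNReal.ofReal_pow (by norm_num), one_div,
          ENNReal.ofReal_inv_of_pos two_pos, ENNReal.ofReal_ofNat, one_div]
    _ ≤ μ (Icc a b) := hμ.half_pow_le_measure_Icc ⟨hl₂, hl₁⟩ ha hb (by linarith)
end

section
/- Let λ ∈ (1/2, 1) and suppose that the Bernoulli convolution measure μ_λ is absolutely continuous with density h ∈ L²([0,1]). Then for every r > 0 with λr < 1 − λ, one has ∫_0^{λr} h(x) dx = (1/2) ∫_0^r h(x) dx and ∫_0^{λr} h(x)² dx = (1/(4λ)) ∫_0^r h(x)² dx; consequently λr · (∫_0^{λr} h²) / (∫_0^{λr} h)² = r · (∫_0^r h²) / (∫_0^r h)². -/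
/-!
For `x < 1 - λ` the preimage `S₂⁻¹ x` is negative, where `μ_λ` has no mass, so the
self-similarity reduces there to `h x = (2λ)⁻¹ h (x / λ)` almost everywhere. Integrating `h`
and `h²` over `[0, λr] ⊆ (-∞, 1 - λ)` and substituting `x = λy` gives the two scaling
identities, and the identity for the ratios is algebra.
-/

open MeasureTheory Filter Set
open scoped ENNReal

open scoped Interval

theorem Real.map_volume_withDensity_mul_left {a : ℝ} (ha : 0 < a) {f : ℝ → ℝ≥0∞}
    (hf : Measurable f) :
    (volume.withDensity f).map (a * ·) =
      volume.withDensity fun y => ENNReal.ofReal a⁻¹ * f (y / a) := by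
  have hmul : Measurable (a * · : ℝ → ℝ) := measurable_const_mul a
  ext s hs
  rw [Measure.map_apply hmul hs, withDensity_apply _ (hmul hs), withDensity_apply _ hs,
    lintegral_const_mul _ (by fun_prop)]
  have := setLIntegral_map hs (μ := volume) (f := fun y => f (y / a)) (by fun_prop) hmul
  rw [Real.map_volume_mul_left ha.ne', Measure.restrict_smul, lintegral_smul_measure,
    abs_of_pos (inv_pos.mpr ha)] at this
  simp only [mul_div_cancel_left₀ _ ha.ne'] at this
  rw [← this, smul_eq_mul]

namespace IsBernoulliConvolution

variable {lam : ℝ} {μ : Measure ℝ}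

theorem measure_eq_zero_of_subset_Iio_zero (hμ : IsBernoulliConvolution lam μ) {s : Set ℝ}
    (hs : s ⊆ Iio 0) : μ s = 0 := by
  obtain ⟨hprob, hIcc, -⟩ := hμ
  have hcompl : μ (Icc (0 : ℝ) 1)ᶜ = 0 := by
    rw [measure_compl measurableSet_Icc (measure_ne_top μ _), hIcc, measure_univ, tsub_self]
  exact measure_mono_null (fun x hx hx01 => not_lt.2 hx01.1 (hs hx) : s ⊆ (Icc 0 1)ᶜ) hcompl

theorem restrict_Iio_eq (hlam : 0 < lam) (hμ : IsBernoulliConvolution lam μ) :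
    μ.restrict (Iio (1 - lam)) =
      ((1 / 2 : ℝ≥0∞) • μ.map (lam * ·)).restrict (Iio (1 - lam)) := by
  have h₂ : Measurable fun x : ℝ => lam * x + 1 - lam := by fun_prop
  have hnull : μ ((fun x => lam * x + 1 - lam) ⁻¹' Iio (1 - lam)) = 0 :=
    hμ.measure_eq_zero_of_subset_Iio_zero fun x hx => by
      simp only [mem_preimage, mem_Iio] at hx ⊢
      nlinarith
  have hmap : (μ.map fun x => lam * x + 1 - lam).restrict (Iio (1 - lam)) = 0 := by
    rw [Measure.restrict_eq_zero, Measure.map_apply h₂ measurableSet_Iio, hnull]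
  conv_lhs => rw [hμ.2.2]
  rw [Measure.restrict_add, Measure.restrict_smul, Measure.restrict_smul, hmap, smul_zero,
    add_zero]

theorem ae_density_eq (hlam : 0 < lam) (hμ : IsBernoulliConvolution lam μ) {h : ℝ → ℝ}
    (hmeas : Measurable h) (hnn : ∀ x, 0 ≤ h x)
    (hdens : μ = volume.withDensity fun x => ENNReal.ofReal (h x)) :
    ∀ᵐ x, x < 1 - lam → h x = (2 * lam)⁻¹ * h (x / lam) := by
  have hrestr := hμ.restrict_Iio_eq hlam
  rw [hdens, Real.map_volume_withDensity_mul_left hlam (by fun_prop),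
    ← withDensity_smul _ (by fun_prop), restrict_withDensity measurableSet_Iio,
    restrict_withDensity measurableSet_Iio,
    withDensity_eq_iff_of_sigmaFinite (by fun_prop) (by fun_prop)] at hrestr
  refine (ae_restrict_iff' measurableSet_Iio).1 ?_
  filter_upwards [hrestr] with x hx
  rw [← ENNReal.ofReal_eq_ofReal_iff (hnn x) (by have := hnn (x / lam); positivity), hx,
    Pi.smul_apply, smul_eq_mul, ← mul_assoc, mul_inv, ENNReal.ofReal_mul (by positivity),
    ENNReal.ofReal_mul (by positivity), ENNReal.ofReal_inv_of_pos two_pos, ENNReal.ofReal_ofNat,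
    one_div]

end IsBernoulliConvolution

theorem intervalIntegral.integral_zero_mul_of_ae_eq_const_mul_comp_div {f : ℝ → ℝ} {a c r : ℝ}
    (ha : a ≠ 0) (hf : ∀ᵐ x, x ∈ Ι 0 (a * r) → f x = c * f (x / a)) :
    ∫ x in 0..a * r, f x = a * c * ∫ x in 0..r, f x := by
  rw [intervalIntegral.integral_congr_ae hf, intervalIntegral.integral_const_mul,
    intervalIntegral.integral_comp_div _ ha, zero_div, mul_div_cancel_left₀ _ ha, smul_eq_mul]
  ring

theorem stmt11_general (lam : ℝ) (hlam : lam ∈ Set.Ioo (1 / 2 : ℝ) 1)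
    (μ : Measure ℝ) (hμ : IsBernoulliConvolution lam μ)
    (h : ℝ → ℝ) (hmeas : Measurable h) (hnn : ∀ x, 0 ≤ h x)
    (hdens : μ = volume.withDensity (fun x => ENNReal.ofReal (h x)))
    (r : ℝ) (hr' : lam * r < 1 - lam) :
    (∫ x in (0:ℝ)..(lam * r), h x) = (1 / 2) * ∫ x in (0:ℝ)..r, h x ∧
      (∫ x in (0:ℝ)..(lam * r), (h x) ^ 2) = (1 / (4 * lam)) * ∫ x in (0:ℝ)..r, (h x) ^ 2 ∧
      lam * r * (∫ x in (0:ℝ)..(lam * r), (h x) ^ 2) / (∫ x in (0:ℝ)..(lam * r), h x) ^ 2 =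
        r * (∫ x in (0:ℝ)..r, (h x) ^ 2) / (∫ x in (0:ℝ)..r, h x) ^ 2 := by
  obtain ⟨hlam_half, hlam_one⟩ := hlam
  have hlam0 : 0 < lam := by linarith
  have hfeq := hμ.ae_density_eq hlam0 hmeas hnn hdens
  have hI : ∀ᵐ x, x ∈ Ι 0 (lam * r) → h x = (2 * lam)⁻¹ * h (x / lam) :=
    hfeq.mono fun x hx hxI => hx <| hxI.2.trans_lt <| max_lt (by linarith) hr'
  have hint : ∫ x in (0:ℝ)..(lam * r), h x = (1 / 2) * ∫ x in (0:ℝ)..r, h x := by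
    rw [intervalIntegral.integral_zero_mul_of_ae_eq_const_mul_comp_div hlam0.ne' hI]
    field_simp
  have hint_sq :
      ∫ x in (0:ℝ)..(lam * r), (h x) ^ 2 = (1 / (4 * lam)) * ∫ x in (0:ℝ)..r, (h x) ^ 2 := by
    rw [intervalIntegral.integral_zero_mul_of_ae_eq_const_mul_comp_div (c := (2 * lam)⁻¹ ^ 2)
      hlam0.ne' (hI.mono fun x hx hxI => by rw [hx hxI]; ring)]
    field_simp
    ring
  refine ⟨hint, hint_sq, ?_⟩
  rw [hint, hint_sq]
  rcases eq_or_ne (∫ x in (0:ℝ)..r, h x) 0 with hA | hA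
  · simp [hA]
  · field_simp
    ring

theorem stmt11 (lam : ℝ) (hlam : lam ∈ Set.Ioo (1 / 2 : ℝ) 1)
    (μ : Measure ℝ) (hμ : IsBernoulliConvolution lam μ)
    (h : ℝ → ℝ) (hmeas : Measurable h) (hnn : ∀ x, 0 ≤ h x)
    (hdens : μ = volume.withDensity (fun x => ENNReal.ofReal (h x)))
    (hL2 : MemLp h 2 volume)
    (r : ℝ) (hr : 0 < r) (hr' : lam * r < 1 - lam) :
    (∫ x in (0:ℝ)..(lam * r), h x) = (1 / 2) * ∫ x in (0:ℝ)..r, h x ∧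
      (∫ x in (0:ℝ)..(lam * r), (h x) ^ 2) = (1 / (4 * lam)) * ∫ x in (0:ℝ)..r, (h x) ^ 2 ∧
      lam * r * (∫ x in (0:ℝ)..(lam * r), (h x) ^ 2) / (∫ x in (0:ℝ)..(lam * r), h x) ^ 2 =
        r * (∫ x in (0:ℝ)..r, (h x) ^ 2) / (∫ x in (0:ℝ)..r, h x) ^ 2 :=
  stmt11_general lam hlam μ hμ h hmeas hnn hdens r hr'
end
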